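/- Let g : (0,∞) → ℝ and let ĝ(x) = x·g(1/x) be its transpose. Then the noncommutative perspectives satisfy P_g(X,Y) = P_{ĝ}(Y,X) for all positive definite Hermitian matrices X, Y of the same size. -/

import Mathlib

open Matrix ComplexOrder

/-- The noncommutative perspective
`P_g(X,Y) = X^{1/2} g(X^{−1/2} Y X^{−1/2}) X^{1/2}`, with `g`, square roots and
inverse square roots applied spectrally via the continuous functional calculus. -/
noncomputable def ncPerspective {n : ℕ} (g : ℝ → ℝ)
    (X Y : Matrix (Fin n) (Fin n) ℂ) : Matrix (Fin n) (Fin n) ℂ :=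
  cfc Real.sqrt X *
    cfc g (cfc (fun t : ℝ => (Real.sqrt t)⁻¹) X * Y *
      cfc (fun t : ℝ => (Real.sqrt t)⁻¹) X) *
    cfc Real.sqrt X

/-!
Put `A = X^{1/2}`, `B = Y^{1/2}` and `S = A⁻¹ B`. Then `X^{-1/2} Y X^{-1/2} = S S*` and
`Y^{-1/2} X Y^{-1/2} = (S* S)⁻¹`. Since `S*` intertwines `S S*` with `S* S`, it intertwines
`g(S S*)` with `g(S* S)`, whence `g(S S*) = S (S* S)⁻¹ g(S* S) S* = S ĝ((S* S)⁻¹) S*`.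
Conjugating by `A` and using `A S = B = S* A` gives `P_g(X,Y) = P_ĝ(Y,X)`.
-/

open Polynomial in
theorem SemiconjBy.aeval {R A : Type*} [CommSemiring R] [Semiring A] [Algebra R A] {a x y : A}
    (h : SemiconjBy a x y) (p : R[X]) : SemiconjBy a (aeval x p) (aeval y p) := by
  induction p using Polynomial.induction_on' with
  | add p q hp hq => simpa only [map_add] using hp.add_right hq
  | monomial k c =>
    simpa only [aeval_monomial] using
      SemiconjBy.mul_right (Algebra.commute_algebraMap_right c a) (h.pow_right k)

open Polynomial in
theorem SemiconjBy.cfc_of_finite_spectrum {A : Type*} [Ring A] [StarRing A] [Algebra ℝ A]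
    [TopologicalSpace A] [ContinuousFunctionalCalculus ℝ A IsSelfAdjoint] {a x y : A}
    (h : SemiconjBy a x y) (hx : IsSelfAdjoint x) (hy : IsSelfAdjoint y)
    (hx_fin : (spectrum ℝ x).Finite) (hy_fin : (spectrum ℝ y).Finite) (f : ℝ → ℝ) :
    SemiconjBy a (cfc f x) (cfc f y) := by
  have : Finite ↥(spectrum ℝ x ∪ spectrum ℝ y) := (hx_fin.union hy_fin).to_subtype
  obtain ⟨p, hp⟩ := (exists_eval_eq_iff Subtype.val (f ∘ Subtype.val)).2
    fun (s t : ↥(spectrum ℝ x ∪ spectrum ℝ y)) hst => congrArg f hst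
  have hx_eq : cfc f x = Polynomial.aeval x p := by
    rw [← cfc_polynomial p x]
    exact cfc_congr fun t ht => (hp ⟨t, .inl ht⟩).symm
  have hy_eq : cfc f y = Polynomial.aeval y p := by
    rw [← cfc_polynomial p y]
    exact cfc_congr fun t ht => (hp ⟨t, .inr ht⟩).symm
  rw [hx_eq, hy_eq]
  exact h.aeval p

theorem cfc_id_mul_comp_inv {A : Type*} [Ring A] [StarRing A] [Algebra ℝ A]
    [TopologicalSpace A] [ContinuousFunctionalCalculus ℝ A IsSelfAdjoint]
    [ContinuousMap.UniqueHom ℝ A] (g : ℝ → ℝ) (u : Aˣ)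
    (hg : ContinuousOn g ((·⁻¹) '' spectrum ℝ (u : A))) (hu : IsSelfAdjoint (u : A)) :
    cfc (fun x => x * g x⁻¹) (u : A) = u * cfc g (↑u⁻¹ : A) := by
  have hg_inv : ContinuousOn (fun x => g x⁻¹) (spectrum ℝ (u : A)) :=
    hg.comp (Units.continuousOn_inv₀_spectrum u) (Set.mapsTo_image _ _)
  rw [cfc_mul (fun x => x) (fun x => g x⁻¹) (u : A), cfc_id' ℝ (u : A), cfc_comp_inv g u]

namespace Matrix

variable {𝕜 n : Type*} [RCLike 𝕜] [Fintype n] [DecidableEq n]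

local notation "𝕄" => Matrix n n 𝕜

theorem cfc_mul_star_self (g : ℝ → ℝ) (s : 𝕄ˣ) :
    cfc g ((s : 𝕄) * star (s : 𝕄)) =
      s * cfc (fun x => x * g x⁻¹) (↑((star s * s)⁻¹) : 𝕄) * star (s : 𝕄) := by
  set w := (star s * s)⁻¹
  have hw : IsSelfAdjoint (w : 𝕄) := by
    rw [IsSelfAdjoint, ← Units.coe_star]
    simp [w]
  have htranspose : cfc (fun x => x * g x⁻¹) (w : 𝕄) = w * cfc g (star (s : 𝕄) * s) := by
    rw [cfc_id_mul_comp_inv g w (finite_real_spectrum.image _ |>.continuousOn g) hw, inv_inv]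
    simp
  have hintertwine : star (s : 𝕄) * cfc g ((s : 𝕄) * star (s : 𝕄)) =
      cfc g (star (s : 𝕄) * s) * star (s : 𝕄) :=
    SemiconjBy.cfc_of_finite_spectrum (by simp only [SemiconjBy, mul_assoc])
      (.mul_star_self _) (.star_mul_self _) finite_real_spectrum finite_real_spectrum g
  rw [htranspose, mul_assoc, mul_assoc, ← hintertwine, ← mul_assoc, ← mul_assoc]
  simp [w, ← star_mul]

theorem perspective_transpose_of_units (g : ℝ → ℝ) (u v : 𝕄ˣ)
    (hu : IsSelfAdjoint (u : 𝕄)) (hv : IsSelfAdjoint (v : 𝕄)) :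
    u * cfc g (((u⁻¹ : 𝕄ˣ) : 𝕄) * ((v : 𝕄) * v) * (u⁻¹ : 𝕄ˣ)) * u =
      v * cfc (fun x => x * g x⁻¹) (((v⁻¹ : 𝕄ˣ) : 𝕄) * ((u : 𝕄) * u) * (v⁻¹ : 𝕄ˣ)) * v := by
  set s := u⁻¹ * v
  have hu_inv : IsSelfAdjoint (u : 𝕄)⁻¹ := IsHermitian.inv hu
  have hv_inv : IsSelfAdjoint (v : 𝕄)⁻¹ := IsHermitian.inv hv
  have hs_star : star (s : 𝕄) = v * (u⁻¹ : 𝕄ˣ) := by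
    simp [s, hu_inv.star_eq, hv.star_eq]
  rw [show ((u⁻¹ : 𝕄ˣ) : 𝕄) * ((v : 𝕄) * v) * (u⁻¹ : 𝕄ˣ) = s * star (s : 𝕄) by
      rw [hs_star]; simp [s, mul_assoc],
    show ((v⁻¹ : 𝕄ˣ) : 𝕄) * ((u : 𝕄) * u) * (v⁻¹ : 𝕄ˣ) = ((star s * s)⁻¹ : 𝕄ˣ) by
      simp [s, mul_assoc, hu.star_eq, hv_inv.star_eq],
    cfc_mul_star_self, hs_star]
  simp [s, mul_assoc]

section PosDef

open scoped MatrixOrder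

noncomputable def PosDef.sqrtUnit {X : 𝕄} (hX : X.PosDef) : 𝕄ˣ :=
  cfcUnits Real.sqrt X (fun _ ht => (Real.sqrt_pos.2 (hX.isStrictlyPositive.spectrum_pos ht)).ne')
    (ha := hX.isHermitian.isSelfAdjoint)

theorem PosDef.sqrtUnit_mul_self {X : 𝕄} (hX : X.PosDef) :
    (hX.sqrtUnit * hX.sqrtUnit : 𝕄) = X := by
  have hX_sa := hX.isHermitian.isSelfAdjoint
  change cfc Real.sqrt X * cfc Real.sqrt X = X
  rw [← cfc_mul .., cfc_congr (f := fun t => √t * √t) (g := id) fun _ ht =>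
    Real.mul_self_sqrt (hX.isStrictlyPositive.spectrum_pos ht).le, cfc_id ℝ X]

end PosDef

end Matrix

/-- Transpose identity for noncommutative perspectives:
`P_g(X,Y) = P_ĝ(Y,X)` where `ĝ(x) = x·g(1/x)`. -/
theorem ncPerspective_transpose {n : ℕ} (g : ℝ → ℝ)
    (X Y : Matrix (Fin n) (Fin n) ℂ) (hX : X.PosDef) (hY : Y.PosDef) :
    ncPerspective g X Y = ncPerspective (fun x => x * g x⁻¹) Y X := by
  have key := perspective_transpose_of_units g hX.sqrtUnit hY.sqrtUnit
    (cfc_predicate _ X) (cfc_predicate _ Y)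
  rw [hX.sqrtUnit_mul_self, hY.sqrtUnit_mul_self] at key
  -- `key` is the claim once `sqrtUnit` and its inverse unfold to `cfc √·` and `cfc (√·)⁻¹`.
  exact key
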